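/- arXiv:1810.12195 — 2 statements merged into one kernel-verified Lean document; each statement's English description precedes it below -/
import Mathlib

section
/- Let A be an N×N Hermitian positive definite complex matrix and B_1, …, B_n be N×N Hermitian positive semidefinite complex matrices, and for x ∈ ℝⁿ with x_i ≥ 0 for all i let Σ(x) = (A + Σ_{i=1}^n x_i B_i)⁻¹. Then the E-optimal metric f_E(x) = λ_max(Σ(x)), the largest eigenvalue of the Hermitian matrix Σ(x), which equals sup over unit vectors u ∈ ℂᴺ of u^H Σ(x) u, is convex on the nonnegative orthant {x ∈ ℝⁿ | x_i ≥ 0 for all i}. -/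
/-!
For positive definite `P`, `uᴴ P⁻¹ u = max_w (2 Re (wᴴ u) - wᴴ P w)`, the maximum being attained at
`w = P⁻¹ u`. As a supremum of affine functions of `P`, `P ↦ uᴴ P⁻¹ u` is
convex on the positive definite matrices, hence so is its composition with the affine map
`x ↦ A + ∑ i, x i • B i`, which sends the nonnegative orthant into them. Finally `λ_max` is the
supremum over the compact unit sphere of these convex functions of `x`.
-/

open Matrix ComplexOrder

theorem convexOn_ciSup {ι E : Type*} [AddCommMonoid E] [Module ℝ E] {s : Set E}
    {f : ι → E → ℝ} (hs : Convex ℝ s) (hf : ∀ i, ConvexOn ℝ s (f i))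
    (hbdd : ∀ x ∈ s, BddAbove (Set.range fun i => f i x)) :
    ConvexOn ℝ s fun x => ⨆ i, f i x := by
  cases isEmpty_or_nonempty ι
  · simpa only [Real.iSup_of_isEmpty] using convexOn_const 0 hs
  refine ⟨hs, fun x hx y hy a b ha hb hab => ciSup_le fun i => ?_⟩
  exact ((hf i).2 hx hy ha hb hab).trans <| add_le_add
    (smul_le_smul_of_nonneg_left (le_ciSup (hbdd x hx) i) ha)
    (smul_le_smul_of_nonneg_left (le_ciSup (hbdd y hy) i) hb)

namespace Matrix

variable {𝕜 ι : Type*} [RCLike 𝕜]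

theorem convex_setOf_posDef : Convex ℝ {P : Matrix ι ι 𝕜 | P.PosDef} := by
  intro P hP Q hQ a b ha hb hab
  rcases ha.eq_or_lt with rfl | ha
  · simpa [show b = 1 by linarith] using hQ
  · exact (hP.smul ha).add_posSemidef (hQ.posSemidef.smul hb)

variable [Fintype ι] [DecidableEq ι]

open RCLike in
theorem PosDef.isGreatest_re_dotProduct_inv_mulVec {P : Matrix ι ι 𝕜} (hP : P.PosDef)
    (u : ι → 𝕜) :
    IsGreatest (Set.range fun w => 2 * re (star w ⬝ᵥ u) - re (star w ⬝ᵥ P *ᵥ w))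
      (re (star u ⬝ᵥ P⁻¹ *ᵥ u)) := by
  set c := P⁻¹ *ᵥ u
  have hPc : P *ᵥ c = u := by
    simp [c, mulVec_mulVec, mul_nonsing_inv _ ((isUnit_iff_isUnit_det P).mp hP.isUnit)]
  clear_value c
  have hcP : star c ᵥ* P = star u := by
    rw [← hPc, star_mulVec, hP.isHermitian.eq]
  have re_swap : ∀ v w : ι → 𝕜, re (star v ⬝ᵥ w) = re (star w ⬝ᵥ v) := fun v w => by
    rw [star_dotProduct, RCLike.star_def, RCLike.conj_re]
  refine ⟨⟨c, ?_⟩, ?_⟩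
  · simp only [hPc]
    rw [re_swap c u]
    ring
  · rintro _ ⟨w, rfl⟩
    -- completing the square: `(w - c)ᴴ P (w - c) ≥ 0`
    have hsq := hP.posSemidef.re_dotProduct_nonneg (w - c)
    rw [star_sub, mulVec_sub, sub_dotProduct, dotProduct_sub, dotProduct_sub, hPc,
      dotProduct_mulVec (star c), hcP, map_sub, map_sub, map_sub] at hsq
    have := re_swap u w
    have := re_swap c u
    dsimp only
    linarith

theorem convexOn_re_dotProduct_inv_mulVec (u : ι → 𝕜) :
    ConvexOn ℝ {P : Matrix ι ι 𝕜 | P.PosDef} fun P => RCLike.re (star u ⬝ᵥ P⁻¹ *ᵥ u) := by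
  have affine (w : ι → 𝕜) : ConvexOn ℝ {P : Matrix ι ι 𝕜 | P.PosDef}
      fun P => 2 * RCLike.re (star w ⬝ᵥ u) - RCLike.re (star w ⬝ᵥ P *ᵥ w) := by
    refine ⟨convex_setOf_posDef, fun P _ Q _ a b _ _ hab => le_of_eq ?_⟩
    simp only [add_mulVec, smul_mulVec, dotProduct_add, dotProduct_smul, map_add,
      RCLike.smul_re, smul_eq_mul]
    linear_combination (-2 * RCLike.re (star w ⬝ᵥ u)) * hab
  refine (convexOn_ciSup convex_setOf_posDef affine fun P hP =>
    (hP.isGreatest_re_dotProduct_inv_mulVec u).bddAbove).congr fun P hP => ?_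
  exact (hP.isGreatest_re_dotProduct_inv_mulVec u).csSup_eq

end Matrix

theorem isCompact_setOf_sum_normSq_eq_one {ι : Type*} [Fintype ι] :
    IsCompact {u : ι → ℂ | ∑ j, Complex.normSq (u j) = 1} := by
  refine Metric.isCompact_of_isClosed_isBounded (isClosed_eq (by fun_prop) continuous_const) ?_
  refine (Metric.isBounded_iff_subset_closedBall 0).2 ⟨1, fun u (hu : _ = _) => ?_⟩
  refine mem_closedBall_zero_iff.2 ((pi_norm_le_iff_of_nonneg zero_le_one).2 fun j => ?_)
  have : ‖u j‖ ^ 2 ≤ 1 := by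
    rw [← Complex.normSq_eq_norm_sq, ← hu]
    exact Finset.single_le_sum (fun k _ => Complex.normSq_nonneg (u k)) (Finset.mem_univ j)
  exact (sq_le_one_iff₀ (norm_nonneg _)).1 this

open Matrix ComplexOrder in
/-- The E-optimal metric `x ↦ λ_max((A + ∑ i, x i • B i)⁻¹)`, expressed as the
supremum of the Rayleigh quotient `uᴴ Σ(x) u` over unit vectors `u`, is convex
on the nonnegative orthant. -/
theorem lambdaMax_convex (N n : ℕ)
    (A : Matrix (Fin N) (Fin N) ℂ) (hA : A.PosDef)
    (B : Fin n → Matrix (Fin N) (Fin N) ℂ) (hB : ∀ i, (B i).PosSemidef) :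
    ConvexOn ℝ {x : Fin n → ℝ | ∀ i, 0 ≤ x i}
      (fun x : Fin n → ℝ =>
        ⨆ u : {u : Fin N → ℂ // ∑ j, Complex.normSq (u j) = 1},
          (star (u : Fin N → ℂ) ⬝ᵥ
            ((A + ∑ i, x i • B i)⁻¹).mulVec (u : Fin N → ℂ)).re) := by
  let L : (Fin n → ℝ) →ᵃ[ℝ] Matrix (Fin N) (Fin N) ℂ :=
    AffineMap.const ℝ _ A + (Fintype.linearCombination ℝ B).toAffineMap
  have hL (x : Fin n → ℝ) : L x = A + ∑ i, x i • B i := by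
    simp [L, Fintype.linearCombination_apply]
  have horthant : Convex ℝ {x : Fin n → ℝ | ∀ i, 0 ≤ x i} := convex_Ici 0
  have hPD : {x : Fin n → ℝ | ∀ i, 0 ≤ x i} ⊆ L ⁻¹' {P | P.PosDef} := fun x hx => by
    change (L x).PosDef
    rw [hL]
    exact hA.add_posSemidef (posSemidef_sum _ fun i _ => (hB i).smul (hx i))
  refine convexOn_ciSup horthant (fun u => ?_) fun x _ => ?_
  · refine (((convexOn_re_dotProduct_inv_mulVec u.1).comp_affineMap L).subset hPD horthant).congr
      fun x _ => ?_
    simp [hL]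
  · have hcont : Continuous fun u : Fin N → ℂ => (star u ⬝ᵥ (A + ∑ i, x i • B i)⁻¹ *ᵥ u).re := by
      fun_prop
    exact (isCompact_setOf_sum_normSq_eq_one.bddAbove_image hcont.continuousOn).mono
      (by rintro _ ⟨u, rfl⟩; exact ⟨u, u.2, rfl⟩)
end

section
/- Let A be an N×N Hermitian positive definite complex matrix and B_1, …, B_n be N×N Hermitian positive semidefinite complex matrices, and for x ∈ ℝⁿ with x_i ≥ 0 for all i let Σ(x) = (A + Σ_{i=1}^n x_i B_i)⁻¹ and f_M(x) = max_{1≤j≤N} (Σ(x))_{j,j}, the largest diagonal entry of Σ(x). Let x̃ be a point with x̃_i ≥ 0 for all i, let j* be an index achieving the maximum diagonal entry of Σ(x̃), and let e ∈ ℂᴺ be the j*-th standard basis vector. Define g ∈ ℝⁿ by g_i = −e^H Σ(x̃) B_i Σ(x̃) e. Then g is a subgradient of f_M at x̃ over the nonnegative orthant: f_M(x) ≥ f_M(x̃) + ⟨g, x − x̃⟩ for all x with x_i ≥ 0 for all i. -/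
/-!
Inversion is operator convex on positive definite matrices: for `P, Q ≻ 0`,
`Q⁻¹ - (P⁻¹ - P⁻¹ (Q - P) P⁻¹) = (P⁻¹ (Q - P)) Q⁻¹ ((Q - P) P⁻¹) ⪰ 0`.
With `P = A + ∑ x̃ᵢ Bᵢ` and `Q = A + ∑ xᵢ Bᵢ` the `j*`-th diagonal entry of this Loewner
inequality reads `Σ(x)_{j*j*} ≥ f_M(x̃) + ⟨g, x - x̃⟩`, and `f_M(x) ≥ Σ(x)_{j*j*}`.
-/

namespace Matrix

variable {m : Type*}

theorem inv_sub_inv_sub_mul_eq [Fintype m] [DecidableEq m] {R : Type*} [CommRing R]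
    {P Q : Matrix m m R} (hP : IsUnit P.det) (hQ : IsUnit Q.det) :
    Q⁻¹ - (P⁻¹ - P⁻¹ * (Q - P) * P⁻¹) = P⁻¹ * (Q - P) * Q⁻¹ * ((Q - P) * P⁻¹) := by
  simp only [mul_sub, sub_mul, mul_assoc, nonsing_inv_mul _ hP, mul_nonsing_inv _ hP,
    mul_nonsing_inv _ hQ, mul_one, one_mul, nonsing_inv_mul_cancel_left _ _ hQ]
  abel

section RCLike

variable {𝕜 : Type*} [RCLike 𝕜]

open scoped MatrixOrder ComplexOrder

theorem diag_le_diag {A B : Matrix m m 𝕜} (h : A ≤ B) (j : m) : A j j ≤ B j j := by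
  simpa [sub_nonneg] using (le_iff.mp h).diag_nonneg (i := j)

theorem PosDef.add_sum_smul [Fintype m] {ι : Type*} [Fintype ι] {A : Matrix m m 𝕜}
    (hA : A.PosDef) {B : ι → Matrix m m 𝕜} (hB : ∀ i, (B i).PosSemidef) {x : ι → ℝ}
    (hx : ∀ i, 0 ≤ x i) : (A + ∑ i, x i • B i).PosDef :=
  hA.add_posSemidef <| posSemidef_sum _ fun i _ ↦ (hB i).smul (hx i)

theorem PosDef.inv_sub_inv_mul_sub_mul_inv_le_inv [Fintype m] [DecidableEq m]
    {P Q : Matrix m m 𝕜} (hP : P.PosDef) (hQ : Q.PosDef) : P⁻¹ - P⁻¹ * (Q - P) * P⁻¹ ≤ Q⁻¹ := by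
  have hadj : ((Q - P) * P⁻¹)ᴴ = P⁻¹ * (Q - P) := by
    rw [conjTranspose_mul, hP.inv.isHermitian.eq, (hQ.isHermitian.sub hP.isHermitian).eq]
  rw [le_iff, inv_sub_inv_sub_mul_eq hP.det_pos.ne'.isUnit hQ.det_pos.ne'.isUnit, ← hadj]
  exact hQ.inv.posSemidef.conjTranspose_mul_mul_same _

end RCLike

end Matrix

open Matrix ComplexOrder in
/-- A subgradient of the M-optimal metric
`f_M(x) = max_j ((A + ∑ i, x i • B i)⁻¹)_{j,j}` at a point `x̃` of the
nonnegative orthant: if `j*` achieves the maximum diagonal entry of `Σ(x̃)` and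
`e` is the `j*`-th standard basis vector, then `g` with
`g i = −eᴴ Σ(x̃) B i Σ(x̃) e` is a subgradient of `f_M` at `x̃`. -/
theorem maxDiag_subgradient (N n : ℕ)
    (A : Matrix (Fin N) (Fin N) ℂ) (hA : A.PosDef)
    (B : Fin n → Matrix (Fin N) (Fin N) ℂ) (hB : ∀ i, (B i).PosSemidef)
    (fM : (Fin n → ℝ) → ℝ)
    (hfM : ∀ x : Fin n → ℝ, fM x =
      ⨆ j : Fin N, (((A + ∑ i, x i • B i)⁻¹) j j).re)
    (xt : Fin n → ℝ) (hxt : ∀ i, 0 ≤ xt i)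
    (jstar : Fin N)
    (hjstar : (((A + ∑ j, xt j • B j)⁻¹) jstar jstar).re = fM xt)
    (e : Fin N → ℂ) (he : e = Pi.single jstar 1)
    (g : Fin n → ℝ)
    (hg : ∀ i, g i =
      -(star e ⬝ᵥ
          ((A + ∑ j, xt j • B j)⁻¹ * B i * (A + ∑ j, xt j • B j)⁻¹).mulVec e).re) :
    ∀ x : Fin n → ℝ, (∀ i, 0 ≤ x i) →
      fM xt + ∑ i, g i * (x i - xt i) ≤ fM x := by
  intro x hx
  set S := (A + ∑ j, xt j • B j)⁻¹
  have hdiff : A + ∑ i, x i • B i - (A + ∑ j, xt j • B j) = ∑ i, (x i - xt i) • B i := by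
    simp only [add_sub_add_left_eq_sub, ← Finset.sum_sub_distrib, sub_smul]
  have htangent := Complex.le_def.mp <| diag_le_diag
    ((hA.add_sum_smul hB hxt).inv_sub_inv_mul_sub_mul_inv_le_inv (hA.add_sum_smul hB hx)) jstar
  have hlin : ((S * (∑ i, (x i - xt i) • B i) * S) jstar jstar).re =
      -∑ i, g i * (x i - xt i) := by
    simp [hg, he, Finset.mul_sum, Finset.sum_mul, Matrix.sum_apply, mul_comm]
  have hmax : ((A + ∑ i, x i • B i)⁻¹ jstar jstar).re ≤ fM x :=
    hfM x ▸ le_ciSup (f := fun j ↦ ((A + ∑ i, x i • B i)⁻¹ j j).re)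
      (Set.finite_range _).bddAbove jstar
  rw [hdiff, Matrix.sub_apply, Complex.sub_re, hlin] at htangent
  linarith [htangent.1]
end
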